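/- arXiv:2208.00366 — 2 statements merged into one kernel-verified Lean document; each statement's English description precedes it below -/
import Mathlib

section
/- Fix positive integers P, P′ with H = gcd(P, P′), P = HY, P′ = HY′, and call unimodular A, B ∈ ℤ^{2×2} equivalent (A ≡ B) if there exist c ∈ ℤ coprime with Y and c′ ∈ ℤ coprime with Y′ such that diag(c, c′)·A ≡ B with the first row taken mod Y and the second row mod Y′. Let k, ℓ ∈ ℕ and let A, B be unimodular with A ≡ B. Then: (1) A·(ℓ, k)ᵀ ≡ (0, 0)ᵀ (first entry mod P, second entry mod P′) if and only if B·(ℓ, k)ᵀ ≡ (0, 0)ᵀ (first entry mod P, second entry mod P′); (2) AC ≡ BC for any unimodular C ∈ ℤ^{2×2}. -/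
open Filter Topology Matrix
open scoped ENNReal

namespace Paper

variable {A : Type*}

/-- The factor of `u` of length `len` starting at position `i`. -/
def factorAt (u : ℕ → A) (i len : ℕ) : List A :=
  (List.range len).map fun k => u (i + k)

/-- The word `w` occurs in `u` at position `i`. -/
def OccursAt (u : ℕ → A) (w : List A) (i : ℕ) : Prop :=
  w = factorAt u i w.length

/-- `w` is a factor of the sequence `u`. -/
def IsFactor (u : ℕ → A) (w : List A) : Prop :=
  ∃ i, OccursAt u w i

/-- `u` is recurrent: every factor occurs infinitely often. -/
def Recurrent (u : ℕ → A) : Prop :=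
  ∀ w, IsFactor u w → ∀ N, ∃ i, N ≤ i ∧ OccursAt u w i

/-- `u` is uniformly recurrent: every factor occurs in every window of some fixed length. -/
def UniformlyRecurrent (u : ℕ → A) : Prop :=
  ∀ w, IsFactor u w → ∃ R, ∀ i, ∃ j, i ≤ j ∧ j < i + R ∧ OccursAt u w j

/-- `u` is eventually periodic. -/
def EventuallyPeriodic (u : ℕ → A) : Prop :=
  ∃ p, 0 < p ∧ ∃ N, ∀ n, N ≤ n → u (n + p) = u n

/-- `u` is balanced: counts of each letter in equal-length factors differ by at most 1. -/
def IsBalanced [DecidableEq A] (u : ℕ → A) : Prop :=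
  ∀ (c : A) (w w' : List A), IsFactor u w → IsFactor u w' → w.length = w'.length →
    (w.count c : ℤ) - (w'.count c : ℤ) ≤ 1

/-- `w^{n/|w|}`, i.e. the prefix of length `n` of `w^ω`, is a factor of `u`
(for a nonempty word `w`). -/
def HasPowerFactor (u : ℕ → A) (w : List A) (n : ℕ) : Prop :=
  w ≠ [] ∧ ∃ i, ∀ k, k < n → u (i + k) = w.getD (k % w.length) (u i)

/-- The critical exponent `E(u)`. -/
noncomputable def critExp (u : ℕ → A) : ℝ≥0∞ :=
  sSup {e | ∃ w n, HasPowerFactor u w n ∧ e = (n : ℝ≥0∞) / (w.length : ℝ≥0∞)}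

/-- The maximal exponent of a repetition whose root has length `l`. -/
noncomputable def maxExpLen (u : ℕ → A) (l : ℕ) : ℝ≥0∞ :=
  sSup {e | ∃ w n, (w : List A).length = l ∧ HasPowerFactor u w n ∧
    e = (n : ℝ≥0∞) / (l : ℝ≥0∞)}

/-- The asymptotic critical exponent `E*(u)`. -/
noncomputable def acritExp (u : ℕ → A) : ℝ≥0∞ :=
  if critExp u = ⊤ then ⊤ else Filter.limsup (fun l => maxExpLen u l) Filter.atTop

/-- `w` is a right special factor of `u`. -/
def RightSpecial (u : ℕ → A) (w : List A) : Prop :=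
  ∃ c c' : A, c ≠ c' ∧ IsFactor u (w ++ [c]) ∧ IsFactor u (w ++ [c'])

/-- `w` is a left special factor of `u`. -/
def LeftSpecial (u : ℕ → A) (w : List A) : Prop :=
  ∃ c c' : A, c ≠ c' ∧ IsFactor u (c :: w) ∧ IsFactor u (c' :: w)

/-- `w` is a bispecial factor of `u`. -/
def Bispecial (u : ℕ → A) (w : List A) : Prop := LeftSpecial u w ∧ RightSpecial u w

/-- `r` is a return word to `w` in `u`: the word between two consecutive occurrences of `w`. -/
def IsReturnWord (u : ℕ → A) (w r : List A) : Prop :=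
  ∃ i j, i < j ∧ OccursAt u w i ∧ OccursAt u w j ∧
    (∀ t, i < t → t < j → ¬ OccursAt u w t) ∧ r = factorAt u i (j - i)

/-- A Sturmian sequence: an aperiodic balanced sequence over the binary
alphabet `Bool` (`false` = letter a, `true` = letter b). -/
def IsSturmian (u : ℕ → Bool) : Prop :=
  ¬ EventuallyPeriodic u ∧ IsBalanced u

/-- Prepend a letter to a sequence. -/
def prepend (c : A) (u : ℕ → A) : ℕ → A
  | 0 => c
  | n + 1 => u n

/-- A standard Sturmian sequence: `u`, `a·u` and `b·u` are all Sturmian. -/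
def IsStandard (u : ℕ → Bool) : Prop :=
  IsSturmian u ∧ IsSturmian (prepend false u) ∧ IsSturmian (prepend true u)

/-- The letter `c` has frequency `ρ` in `u`. -/
def HasFreq [DecidableEq A] (u : ℕ → A) (c : A) (ρ : ℝ) : Prop :=
  Tendsto (fun n => ((factorAt u 0 n).count c : ℝ) / n) atTop (𝓝 ρ)

/-- `u` has slope `θ = ρ_a(u)/ρ_b(u)`, with `b = true` the most frequent letter. -/
def HasSlope (u : ℕ → Bool) (θ : ℝ) : Prop :=
  ∃ ρa ρb : ℝ, HasFreq u false ρa ∧ HasFreq u true ρb ∧ ρa < ρb ∧ θ = ρa / ρb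

/-- `cfP a N` is the numerator `p_{N-1}` of the convergents of the continued
fraction `[0; a 1, a 2, …]` (index shifted by one: `cfP a 0 = p_{-1} = 1`). -/
def cfP (a : ℕ → ℕ) : ℕ → ℕ
  | 0 => 1
  | 1 => 0
  | n + 2 => a (n + 1) * cfP a (n + 1) + cfP a n

/-- `cfQ a N` is the denominator `q_{N-1}` of the convergents of the continued
fraction `[0; a 1, a 2, …]` (index shifted by one: `cfQ a 0 = q_{-1} = 0`). -/
def cfQ (a : ℕ → ℕ) : ℕ → ℕ
  | 0 => 0
  | 1 => 1
  | n + 2 => a (n + 1) * cfQ a (n + 1) + cfQ a n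

/-- The value of the continued fraction `[0; a 1, a 2, …]`, as the limit of its
convergents `p_N / q_N`. -/
noncomputable def cfValue (a : ℕ → ℕ) : ℝ :=
  limUnder atTop fun N => (cfP a (N + 1) : ℝ) / (cfQ a (N + 1) : ℝ)

/-- `δ_N = [a_{N+1}; a_{N+2}, …]`, the inverse of the value of the shifted
continued fraction `[0; a_{N+1}, a_{N+2}, …]`. -/
noncomputable def cfDelta (a : ℕ → ℕ) (N : ℕ) : ℝ :=
  (cfValue fun n => a (n + N))⁻¹

/-- `Q_{N-1} = p_{N-1} + q_{N-1}` (shifted index as in `cfP`, `cfQ`). -/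
def cfQpair (a : ℕ → ℕ) (N : ℕ) : ℕ := cfP a N + cfQ a N

/-- The matrix `A_N` with rows `(p_{N-1}, p_N)` and `(q_{N-1}, q_N)`. -/
def cfMat (a : ℕ → ℕ) (N : ℕ) : Matrix (Fin 2) (Fin 2) ℤ :=
  !![(cfP a N : ℤ), (cfP a (N + 1) : ℤ); (cfQ a N : ℤ), (cfQ a (N + 1) : ℤ)]

/-- The colouring of a binary sequence `u` by `y` (on the letter `a = false`) and
`y'` (on the letter `b = true`). -/
def colour (u : ℕ → Bool) (y y' : ℕ → A) (n : ℕ) : A :=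
  if u n then y' ((List.range n).countP fun k => u k)
  else y ((List.range n).countP fun k => !u k)

/-- Colouring of a finite binary word by the sequences `y` and `y'`. -/
def colourWord : (ℕ → A) → (ℕ → A) → List Bool → List A
  | _, _, [] => []
  | y, y', c :: w =>
      if c then y' 0 :: colourWord y (fun n => y' (n + 1)) w
      else y 0 :: colourWord (fun n => y (n + 1)) y' w

/-- A constant gap sequence: every occurring letter occurs with a constant gap. -/
def IsConstantGap (y : ℕ → A) : Prop :=
  ∀ c : A, (∃ n, y n = c) →
    ∃ g, 0 < g ∧ ∀ n, y n = c →
      y (n + g) = c ∧ ∀ t, 0 < t → t < g → y (n + t) ≠ c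

/-- The minimal period of a sequence. -/
noncomputable def minPeriod (y : ℕ → A) : ℕ :=
  sInf {p | 0 < p ∧ ∀ n, y (n + p) = y n}

/-- `d` is a derived sequence of `u` to the factor `z`: coding (by a binary
alphabet, via an injective labelling `f` of return words) of the decomposition
of `u` into return words to `z`. -/
def IsDerivedSeq (u : ℕ → Bool) (z : List Bool) (d : ℕ → Bool) : Prop :=
  ∃ (occ : ℕ → ℕ) (f : Bool → List Bool),
    StrictMono occ ∧ (∀ n, OccursAt u z (occ n)) ∧
    (∀ i, OccursAt u z i → ∃ n, occ n = i) ∧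
    f true ≠ f false ∧
    ∀ n, factorAt u (occ n) (occ (n + 1) - occ n) = f (d n)

/-- The equivalence of unimodular matrices: `M ≡ M'` iff `diag(c,c')·M ≡ M'`
with the first row mod `Y` and the second row mod `Y'`, for some `c` coprime
with `Y` and `c'` coprime with `Y'`. -/
def MatEquiv (Y Y' : ℕ) (M M' : Matrix (Fin 2) (Fin 2) ℤ) : Prop :=
  ∃ c c' : ℤ, IsCoprime c (Y : ℤ) ∧ IsCoprime c' (Y' : ℤ) ∧
    (∀ j, (Y : ℤ) ∣ (c * M 0 j - M' 0 j)) ∧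
    (∀ j, (Y' : ℤ) ∣ (c' * M 1 j - M' 1 j))

/-- `δ > 1` is `(1+β)`-forcing for (the class of) the matrix `M`, with respect to
the periods `P`, `P'`. -/
def IsForcing (β : ℝ) (P P' : ℕ) (M : Matrix (Fin 2) (Fin 2) ℤ) (δ : ℝ) : Prop :=
  1 < δ ∧ ∃ m k l : ℕ, 0 < k + l ∧
    -- (P1)
    ((P : ℤ) ∣ (M 0 0 * (l : ℤ) + M 0 1 * ((m : ℤ) * l + k)) ∧
     (P' : ℤ) ∣ (M 1 0 * (l : ℤ) + M 1 1 * ((m : ℤ) * l + k))) ∧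
    -- (P2)
    ((m : ℝ) + 1 < δ ∧ |(l : ℝ) * (δ - m) - k| < δ - m + 1) ∧
    -- (P3)
    ((k = l → β < 1 / (k : ℝ)) ∧
     (l < k → β ≤ (1 + (m : ℝ)) / ((k : ℝ) + m * l)) ∧
     (k < l → β ≤ (2 + (m : ℝ)) / ((k : ℝ) + (m + 1) * l)))

/-- The set `F(β, M)` of `(1+β)`-forcing `δ`'s. -/
def ForcingSet (β : ℝ) (P P' : ℕ) (M : Matrix (Fin 2) (Fin 2) ℤ) : Set ℝ :=
  {δ | IsForcing β P P' M δ}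

/-- The set `D(β, M) = {δ > 1 : δ is not in the closure of F(β, M)}`. -/
def DSet (β : ℝ) (P P' : ℕ) (M : Matrix (Fin 2) (Fin 2) ℤ) : Set ℝ :=
  {δ | 1 < δ ∧ δ ∉ closure (ForcingSet β P P' M)}

/-- The finite Fibonacci words: fixed-point prefixes of `b ↦ ba`, `a ↦ b`,
where `b = true`, `a = false`. -/
def fibList : ℕ → List Bool
  | 0 => [true]
  | 1 => [true, false]
  | n + 2 => fibList (n + 1) ++ fibList n

/-- The Fibonacci sequence, the fixed point of `b ↦ ba`, `a ↦ b`. -/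
def fibWord (n : ℕ) : Bool := (fibList (n + 2)).getD n true

end Paper

/-! If `M (l, k)ᵀ ≡ 0` modulo `(P, P')ᵀ`, then in particular `M (l, k)ᵀ ≡ 0` modulo `H`, and
since `M` is invertible over `ℤ` this forces `H ∣ l` and `H ∣ k`. After dividing `(l, k)` by `H`,
the two congruences become congruences modulo `Y` and `Y'`, and multiplying a row by a unit
modulo `Y` (resp. `Y'`) does not change whether it annihilates a vector. Part (2) holds because
the row congruences defining `≡` are preserved by right multiplication with any integer matrix. -/

namespace Paper

section DotProduct

variable {R n : Type*} [CommRing R] [Fintype n] {d c : R} {r r' : n → R}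

theorem dvd_mul_dotProduct_sub (h : ∀ j, d ∣ c * r j - r' j) (v : n → R) :
    d ∣ c * (r ⬝ᵥ v) - r' ⬝ᵥ v := by
  have : c * (r ⬝ᵥ v) - r' ⬝ᵥ v = ∑ j, (c * r j - r' j) * v j := by
    simp only [dotProduct, Finset.mul_sum, ← Finset.sum_sub_distrib, sub_mul, mul_assoc]
  rw [this]
  exact Finset.dvd_sum fun j _ => (h j).mul_right _

theorem dvd_dotProduct_iff_of_isCoprime (hc : IsCoprime c d) (h : ∀ j, d ∣ c * r j - r' j)
    (v : n → R) : d ∣ r ⬝ᵥ v ↔ d ∣ r' ⬝ᵥ v := by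
  have hcong := dvd_mul_dotProduct_sub h v
  constructor
  · intro hr
    simpa using dvd_sub (hr.mul_left c) hcong
  · intro hr'
    exact hc.symm.dvd_of_dvd_mul_left (by simpa using dvd_add hcong hr')

theorem mul_dvd_dotProduct_iff_of_isCoprime [IsDomain R] {e : R} {v : n → R}
    (hc : IsCoprime c d) (h : ∀ j, d ∣ c * r j - r' j) (hv : ∀ j, e ∣ v j) :
    e * d ∣ r ⬝ᵥ v ↔ e * d ∣ r' ⬝ᵥ v := by
  choose w hw using hv
  have hvw : v = e • w := funext hw
  rcases eq_or_ne e 0 with rfl | he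
  · simp [hvw]
  · simp only [hvw, dotProduct_smul, smul_eq_mul, mul_dvd_mul_iff_left he,
      dvd_dotProduct_iff_of_isCoprime hc h]

end DotProduct

theorem dvd_of_dvd_mulVec {R n : Type*} [CommRing R] [Fintype n] [DecidableEq n]
    {M : Matrix n n R} (hM : IsUnit M.det) {d : R} {v : n → R}
    (h : ∀ i, d ∣ (M *ᵥ v) i) (i : n) : d ∣ v i := by
  have hv : v = M⁻¹ *ᵥ (M *ᵥ v) := by
    rw [mulVec_mulVec, nonsing_inv_mul M hM, one_mulVec]
  rw [hv]
  exact Finset.dvd_sum fun j _ => (h j).mul_left _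

namespace MatEquiv

variable {Y Y' : ℕ} {M M' : Matrix (Fin 2) (Fin 2) ℤ}

theorem mul_right (h : MatEquiv Y Y' M M') (C : Matrix (Fin 2) (Fin 2) ℤ) :
    MatEquiv Y Y' (M * C) (M' * C) := by
  obtain ⟨c, c', hc, hc', h0, h1⟩ := h
  exact ⟨c, c', hc, hc', fun j => dvd_mul_dotProduct_sub h0 (fun i => C i j),
    fun j => dvd_mul_dotProduct_sub h1 (fun i => C i j)⟩

theorem dvd_mulVec_iff (h : MatEquiv Y Y' M M') {H : ℤ} {v : Fin 2 → ℤ}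
    (hv : ∀ j, H ∣ v j) :
    (H * Y ∣ (M *ᵥ v) 0 ∧ H * Y' ∣ (M *ᵥ v) 1) ↔
      (H * Y ∣ (M' *ᵥ v) 0 ∧ H * Y' ∣ (M' *ᵥ v) 1) := by
  obtain ⟨c, c', hc, hc', h0, h1⟩ := h
  exact and_congr (mul_dvd_dotProduct_iff_of_isCoprime hc h0 hv)
    (mul_dvd_dotProduct_iff_of_isCoprime hc' h1 hv)

end MatEquiv

theorem matEquiv_solutions_and_mul_right_general
    (P P' H Y Y' : ℕ)
    (hY : P = H * Y) (hY' : P' = H * Y')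
    (M M' : Matrix (Fin 2) (Fin 2) ℤ)
    (hM : M.det = 1 ∨ M.det = -1) (hM' : M'.det = 1 ∨ M'.det = -1)
    (hMM' : MatEquiv Y Y' M M') (k l : ℕ) :
    (((P : ℤ) ∣ (M 0 0 * (l : ℤ) + M 0 1 * (k : ℤ)) ∧
       (P' : ℤ) ∣ (M 1 0 * (l : ℤ) + M 1 1 * (k : ℤ))) ↔
     ((P : ℤ) ∣ (M' 0 0 * (l : ℤ) + M' 0 1 * (k : ℤ)) ∧
       (P' : ℤ) ∣ (M' 1 0 * (l : ℤ) + M' 1 1 * (k : ℤ)))) ∧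
    (∀ C : Matrix (Fin 2) (Fin 2) ℤ, (C.det = 1 ∨ C.det = -1) →
      MatEquiv Y Y' (M * C) (M' * C)) := by
  refine ⟨?_, fun C _ => hMM'.mul_right C⟩
  set v : Fin 2 → ℤ := ![l, k]
  have hrow (N : Matrix (Fin 2) (Fin 2) ℤ) (i : Fin 2) :
      N i 0 * l + N i 1 * k = (N *ᵥ v) i := by
    simp [v, mulVec, dotProduct, Fin.sum_univ_two]
  have hP : (P : ℤ) = H * Y := by exact_mod_cast hY
  have hP' : (P' : ℤ) = H * Y' := by exact_mod_cast hY'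
  simp only [hrow, hP, hP']
  have hH (N : Matrix (Fin 2) (Fin 2) ℤ) (hN : N.det = 1 ∨ N.det = -1)
      (hdvd : (H : ℤ) * Y ∣ (N *ᵥ v) 0 ∧ (H : ℤ) * Y' ∣ (N *ᵥ v) 1) (j : Fin 2) :
      (H : ℤ) ∣ v j :=
    dvd_of_dvd_mulVec (Int.isUnit_iff.mpr hN)
      (Fin.forall_fin_two.mpr ⟨dvd_of_mul_right_dvd hdvd.1, dvd_of_mul_right_dvd hdvd.2⟩) j
  exact ⟨fun h => (hMM'.dvd_mulVec_iff (hH M hM h)).1 h,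
    fun h => (hMM'.dvd_mulVec_iff (hH M' hM' h)).2 h⟩

/-- Fix positive `P, P'` with `H = gcd(P, P')`, `P = H·Y`,
`P' = H·Y'`. For unimodular matrices `M ≡ M'` (in the sense of `MatEquiv`):
(1) `M·(l, k)ᵀ ≡ (0,0)ᵀ mod (P, P')ᵀ` iff `M'·(l, k)ᵀ ≡ (0,0)ᵀ mod (P, P')ᵀ`;
(2) `M·C ≡ M'·C` for any unimodular `C`. -/
theorem matEquiv_solutions_and_mul_right
    (P P' H Y Y' : ℕ) (hP : 0 < P) (hP' : 0 < P')
    (hH : H = Nat.gcd P P') (hY : P = H * Y) (hY' : P' = H * Y')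
    (M M' : Matrix (Fin 2) (Fin 2) ℤ)
    (hM : M.det = 1 ∨ M.det = -1) (hM' : M'.det = 1 ∨ M'.det = -1)
    (hMM' : MatEquiv Y Y' M M') (k l : ℕ) :
    (((P : ℤ) ∣ (M 0 0 * (l : ℤ) + M 0 1 * (k : ℤ)) ∧
       (P' : ℤ) ∣ (M 1 0 * (l : ℤ) + M 1 1 * (k : ℤ))) ↔
     ((P : ℤ) ∣ (M' 0 0 * (l : ℤ) + M' 0 1 * (k : ℤ)) ∧
       (P' : ℤ) ∣ (M' 1 0 * (l : ℤ) + M' 1 1 * (k : ℤ)))) ∧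
    (∀ C : Matrix (Fin 2) (Fin 2) ℤ, (C.det = 1 ∨ C.det = -1) →
      MatEquiv Y Y' (M * C) (M' * C)) :=
  matEquiv_solutions_and_mul_right_general P P' H Y Y' hY hY' M M' hM hM' hMM' k l

end Paper
end

section
/- Let β > 0, let P, P′ be positive integers with L = lcm(P, P′) > 1, and let A ∈ ℤ^{2×2} be unimodular. Then D(β, A) ⊆ (1, ⌈L(1+β)⌉ − 2); in particular D(β, A) is bounded. -/
open Filter Topology Matrix
open scoped ENNReal

namespace Paper

/- For `δ` large, `(m, k, ℓ) = (⌈βL⌉ - 1, L, 0)` is a forcing triple: (P1) holds because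
`P, P' ∣ L`, (P3) because `β ≤ ⌈βL⌉ / L`, and (P2) reduces to `L + ⌈βL⌉ - 2 < δ`, which is
`⌈L(1+β)⌉ - 2 < δ`. So the forcing set contains a whole ray, whose closure is disjoint from `D`. -/

variable {β : ℝ} {P P' N : ℕ} {M : Matrix (Fin 2) (Fin 2) ℤ}

lemma isForcing_of_dvd (hN : 2 ≤ N) (hPN : P ∣ N) (hP'N : P' ∣ N) (m : ℕ)
    (hβm : β * N ≤ m + 1) {δ : ℝ} (hδ : (N : ℝ) + m - 1 < δ) :
    IsForcing β P P' M δ := by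
  have hNR : (2 : ℝ) ≤ N := by exact_mod_cast hN
  refine ⟨by linarith, m, N, 0, by omega, ⟨?_, ?_⟩, ⟨by linarith, ?_⟩,
    fun h => absurd h (by omega), fun _ => ?_, fun h => absurd h (by omega)⟩
  · simpa using (Int.natCast_dvd_natCast.mpr hPN).mul_left (M 0 1)
  · simpa using (Int.natCast_dvd_natCast.mpr hP'N).mul_left (M 1 1)
  · rw [Nat.cast_zero, zero_mul, zero_sub, abs_neg, Nat.abs_cast]
    linarith
  · rw [Nat.cast_zero, mul_zero, add_zero, le_div_iff₀ (by linarith)]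
    linarith

lemma Ioi_ceil_sub_two_subset_forcingSet (hβ : 0 < β) (hN : 2 ≤ N) (hPN : P ∣ N)
    (hP'N : P' ∣ N) :
    Set.Ioi ((⌈(N : ℝ) * (1 + β)⌉ : ℝ) - 2) ⊆ ForcingSet β P P' M := by
  intro δ hδ
  have hc : 0 < ⌈β * N⌉ := Int.ceil_pos.mpr (by positivity)
  have hceil : ⌈(N : ℝ) * (1 + β)⌉ = N + ⌈β * N⌉ := by
    rw [show (N : ℝ) * (1 + β) = β * N + ((N : ℤ) : ℝ) by push_cast; ring,
      Int.ceil_add_intCast, add_comm]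
  obtain ⟨m, hm⟩ : ∃ m : ℕ, ⌈β * N⌉ = m + 1 := ⟨(⌈β * N⌉ - 1).toNat, by omega⟩
  have hmR : (⌈β * N⌉ : ℝ) = m + 1 := by exact_mod_cast hm
  refine isForcing_of_dvd hN hPN hP'N m (hmR ▸ Int.le_ceil _) ?_
  rw [Set.mem_Ioi, hceil, Int.cast_add, hmR] at hδ
  push_cast at hδ
  linarith

lemma DSet_subset_Ioo_of_Ioi_subset_forcingSet {B : ℝ}
    (hB : Set.Ioi B ⊆ ForcingSet β P P' M) : DSet β P P' M ⊆ Set.Ioo 1 B :=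
  fun _ ⟨hδ1, hδF⟩ => ⟨hδ1, lt_of_not_ge fun hBδ =>
    hδF (closure_mono hB (closure_Ioi B ▸ hBδ))⟩

theorem DSet_subset_Ioo_and_bddAbove_general
    (β : ℝ) (hβ : 0 < β) (P P' : ℕ)
    (hL : 1 < Nat.lcm P P')
    (M : Matrix (Fin 2) (Fin 2) ℤ) :
    DSet β P P' M ⊆
      Set.Ioo 1 ((⌈(Nat.lcm P P' : ℝ) * (1 + β)⌉ : ℝ) - 2) ∧
    BddAbove (DSet β P P' M) := by
  have hD := DSet_subset_Ioo_of_Ioi_subset_forcingSet (M := M)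
    (Ioi_ceil_sub_two_subset_forcingSet hβ hL (Nat.dvd_lcm_left P P') (Nat.dvd_lcm_right P P'))
  exact ⟨hD, bddAbove_Ioo.mono hD⟩

/-- Let `β > 0`, `P, P'` positive with `L = lcm(P, P') > 1`,
and `M` unimodular. Then `D(β, M) ⊆ (1, ⌈L(1+β)⌉ − 2)`; in particular
`D(β, M)` is bounded. -/
theorem DSet_subset_Ioo_and_bddAbove
    (β : ℝ) (hβ : 0 < β) (P P' : ℕ) (hP : 0 < P) (hP' : 0 < P')
    (hL : 1 < Nat.lcm P P')
    (M : Matrix (Fin 2) (Fin 2) ℤ) (hM : M.det = 1 ∨ M.det = -1) :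
    DSet β P P' M ⊆
      Set.Ioo 1 ((⌈(Nat.lcm P P' : ℝ) * (1 + β)⌉ : ℝ) - 2) ∧
    BddAbove (DSet β P P' M) :=
  DSet_subset_Ioo_and_bddAbove_general β hβ P P' hL M

end Paper
end
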